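/- arXiv:cond-mat/0507379 — 3 statements merged into one kernel-verified Lean document; each statement's English description precedes it below -/
import Mathlib

section
/- Let f : ℝ → ℝ, let α_l < α_h, and suppose f admits supporting lines with the same slope q_c at both α_l and α_h (i.e., f(β) ≤ f(α_l) + q_c·(β − α_l) and f(β) ≤ f(α_h) + q_c·(β − α_h) for all β ∈ ℝ). Suppose moreover that τ(q) is finite for every q, so τ may be regarded as a function ℝ → ℝ. Then: (i) τ(q_c) = q_c·α_l − f(α_l) = q_c·α_h − f(α_h); (ii) τ(q) ≤ τ(q_c) + α_l·(q − q_c) for all q > q_c and τ(q) ≤ τ(q_c) + α_h·(q − q_c) for all q < q_c; and (iii) τ is not differentiable at q_c (there is no d ∈ ℝ with HasDerivAt τ d q_c). -/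
/-! A supporting line of slope `q_c` at `α` makes `α` a minimiser of `β ↦ q_c β − f β`, so
`τ(q) ≤ q α − f(α) = τ(q_c) + α (q − q_c)` for every `q`. Taking `α = α_l` to the right of `q_c`
and `α = α_h` to its left bounds the right difference quotients of `τ` at `q_c` above by `α_l`
and the left ones below by `α_h > α_l`, so no derivative can exist there. -/

open Set

noncomputable def freeEnergy (f : ℝ → ℝ) (q : ℝ) : ℝ :=
  ⨅ β : ℝ, (q * β - f β)

theorem freeEnergy_le {f : ℝ → ℝ} {q : ℝ} (hbdd : BddBelow (range fun β : ℝ => q * β - f β))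
    (β : ℝ) : freeEnergy f q ≤ q * β - f β :=
  ciInf_le hbdd β

theorem freeEnergy_eq_of_supportingLine {f : ℝ → ℝ} {α η : ℝ}
    (h : ∀ β : ℝ, f β ≤ f α + η * (β - α)) : freeEnergy f η = η * α - f α := by
  refine IsGLB.ciInf_eq (IsLeast.isGLB ⟨mem_range_self α, forall_mem_range.2 fun β => ?_⟩)
  linarith [h β]

theorem freeEnergy_le_of_supportingLine {f : ℝ → ℝ} {α η q : ℝ}
    (h : ∀ β : ℝ, f β ≤ f α + η * (β - α)) (hbdd : BddBelow (range fun β : ℝ => q * β - f β)) :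
    freeEnergy f q ≤ freeEnergy f η + α * (q - η) := by
  rw [freeEnergy_eq_of_supportingLine h]
  linarith [freeEnergy_le hbdd α]

theorem HasDerivAt.le_of_le_affine_right {g : ℝ → ℝ} {d x a : ℝ} (hd : HasDerivAt g d x)
    (h : ∀ y, x < y → g y ≤ g x + a * (y - x)) : d ≤ a := by
  refine le_of_tendsto hd.tendsto_slope_zero_right ?_
  filter_upwards [self_mem_nhdsWithin] with t (ht : 0 < t)
  have := h (x + t) (by linarith)
  rw [smul_eq_mul, inv_mul_le_iff₀ ht]
  linarith

theorem HasDerivAt.le_of_le_affine_left {g : ℝ → ℝ} {d x a : ℝ} (hd : HasDerivAt g d x)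
    (h : ∀ y, y < x → g y ≤ g x + a * (y - x)) : a ≤ d := by
  refine ge_of_tendsto hd.tendsto_slope_zero_left ?_
  filter_upwards [self_mem_nhdsWithin] with t (ht : t < 0)
  have := h (x + t) (by linarith)
  rw [smul_eq_mul, ← div_eq_inv_mul, le_div_iff_of_neg ht]
  linarith

/-- If `f` admits supporting lines with common slope `q_c` at two points
`α_l < α_h`, and the real-valued free energy `τ(q) = inf_β (q·β − f(β))` is
finite everywhere, then (i) `τ(q_c) = q_c·α_l − f(α_l) = q_c·α_h − f(α_h)`,
(ii) `τ` lies below the lines of slopes `α_l` (for `q > q_c`) and `α_h`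
(for `q < q_c`) through `(q_c, τ(q_c))`, and (iii) `τ` is not differentiable
at `q_c`. -/
theorem freeEnergy_not_differentiable_of_two_supporting_lines
    (f : ℝ → ℝ) (αl αh qc : ℝ) (hlt : αl < αh)
    (hsl : ∀ β : ℝ, f β ≤ f αl + qc * (β - αl))
    (hsh : ∀ β : ℝ, f β ≤ f αh + qc * (β - αh))
    (hbdd : ∀ q : ℝ, BddBelow (Set.range fun β : ℝ => q * β - f β)) :
    (⨅ β : ℝ, (qc * β - f β)) = qc * αl - f αl ∧
    (⨅ β : ℝ, (qc * β - f β)) = qc * αh - f αh ∧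
    (∀ q : ℝ, qc < q →
      (⨅ β : ℝ, (q * β - f β)) ≤ (⨅ β : ℝ, (qc * β - f β)) + αl * (q - qc)) ∧
    (∀ q : ℝ, q < qc →
      (⨅ β : ℝ, (q * β - f β)) ≤ (⨅ β : ℝ, (qc * β - f β)) + αh * (q - qc)) ∧
    ¬ ∃ d : ℝ, HasDerivAt (fun q : ℝ => ⨅ β : ℝ, (q * β - f β)) d qc := by
  have below_l (q : ℝ) := freeEnergy_le_of_supportingLine hsl (hbdd q)
  have below_h (q : ℝ) := freeEnergy_le_of_supportingLine hsh (hbdd q)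
  refine ⟨freeEnergy_eq_of_supportingLine hsl, freeEnergy_eq_of_supportingLine hsh,
    fun q _ => below_l q, fun q _ => below_h q, ?_⟩
  rintro ⟨d, hd⟩
  have right_slope : d ≤ αl := hd.le_of_le_affine_right fun q _ => below_l q
  have left_slope : αh ≤ d := hd.le_of_le_affine_left fun q _ => below_h q
  linarith
end

section
/- Recovery of the nonconcave Ulam spectrum at α = 1/2 from the Gaussian free energy: ⨅_{(q,γ) ∈ ℝ × ℝ} (((q·(1/2) + γ·(1/4) − min (q/2 + γ/4) (q + γ − 1)) : ℝ) : EReal) = 0. -/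
/-- Recovery of the nonconcave Ulam spectrum at `α = 1/2` from the Gaussian
free energy `τ(q, γ) = min (q/2 + γ/4) (q + γ − 1)`: the generalized
Legendre–Fenchel transform of `τ` at `α = 1/2` equals `0`. -/
theorem ulam_recovery_half :
    (⨅ p : ℝ × ℝ,
      (((p.1 * (1/2) + p.2 * (1/4) - min (p.1/2 + p.2/4) (p.1 + p.2 - 1) : ℝ) : EReal)))
      = (0 : EReal) := by
  -- At `α = 1/2` the linear part `q α + γ α²` is the first branch of the min, so every term is
  -- nonnegative; at `(2, 0)` both branches equal `1` and the term vanishes.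
  refine le_antisymm (iInf_le_of_le (2, 0) (by norm_num)) (le_iInf fun p => ?_)
  have min_le_linear := min_le_left (p.1/2 + p.2/4) (p.1 + p.2 - 1)
  exact EReal.coe_nonneg.mpr (by linarith)
end

section
/- Recovery of the nonconcave Ulam spectrum at α = 1 from the Gaussian free energy: ⨅_{(q,γ) ∈ ℝ × ℝ} (((q + γ − min (q/2 + γ/4) (q + γ − 1)) : ℝ) : EReal) = 1. -/
/-- Recovery of the nonconcave Ulam spectrum at `α = 1` from the Gaussian
free energy `τ(q, γ) = min (q/2 + γ/4) (q + γ − 1)`: the generalized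
Legendre–Fenchel transform of `τ` at `α = 1` equals `1`. -/
theorem ulam_recovery_one :
    (⨅ p : ℝ × ℝ,
      (((p.1 + p.2 - min (p.1/2 + p.2/4) (p.1 + p.2 - 1) : ℝ) : EReal)))
      = (1 : EReal) := by
  refine le_antisymm (iInf_le_of_le (0, 0) (by norm_num)) (le_iInf fun p => ?_)
  have one_le : (1 : ℝ) ≤ p.1 + p.2 - min (p.1/2 + p.2/4) (p.1 + p.2 - 1) := by
    linarith [min_le_right (p.1/2 + p.2/4) (p.1 + p.2 - 1)]
  exact_mod_cast one_le
end
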